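/- arXiv:2602.14728 — 3 statements merged into one kernel-verified Lean document; each statement's English description precedes it below -/
import Mathlib

section
/- Let X, Y ∈ ℝ^{m × n} be real matrices and let τ ∈ ℝ with τ ≠ 0. If the column spaces intersect trivially, range(X) ∩ range(Y) = {0}, and the row spaces intersect trivially, range(Xᵀ) ∩ range(Yᵀ) = {0}, then rank(X − τY) = rank(X) + rank(Y). -/
/-!
Because the column spaces of `X` and `Y` meet trivially, `(X - τY)v = 0` forces `Xv = Yv = 0`, so
`X - τY` has the same kernel, hence the same rank, as the stacked matrix `[X; Y]`. Its transpose
`[Xᵀ Yᵀ]` has as column space the sum of the row spaces of `X` and `Y`, which is direct.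
-/

open LinearMap Module

theorem LinearMap.ker_add_eq_inf_of_disjoint_range {R M N : Type*} [Ring R] [AddCommGroup M]
    [AddCommGroup N] [Module R M] [Module R N] {f g : M →ₗ[R] N}
    (h : Disjoint (range f) (range g)) : ker (f + g) = ker f ⊓ ker g := by
  refine le_antisymm (fun v hv ↦ ?_) (fun v hv ↦ by simp_all)
  have hfg : f v = -g v := eq_neg_of_add_eq_zero_left hv
  have hf : f v = 0 :=
    Submodule.disjoint_def.mp h _ (mem_range_self f v) (hfg ▸ neg_mem (mem_range_self g v))
  exact ⟨hf, by simpa [hf] using hfg⟩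

namespace Matrix

variable {K : Type*} [Field K] {m m' n n' : Type*}

theorem rank_eq_rank_of_ker_mulVecLin_eq [Fintype n] {A : Matrix m n K} {B : Matrix m' n K}
    (h : ker A.mulVecLin = ker B.mulVecLin) : A.rank = B.rank := by
  have hA := finrank_range_add_finrank_ker A.mulVecLin
  have hB := finrank_range_add_finrank_ker B.mulVecLin
  rw [h] at hA
  exact Nat.add_right_cancel (hA.trans hB.symm)

theorem ker_mulVecLin_fromRows [Fintype n] (A : Matrix m n K) (B : Matrix m' n K) :
    ker (fromRows A B).mulVecLin = ker A.mulVecLin ⊓ ker B.mulVecLin := by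
  ext v
  simp [funext_iff]

theorem range_mulVecLin_fromCols [Fintype n] [Fintype n'] (A : Matrix m n K) (B : Matrix m n' K) :
    range (fromCols A B).mulVecLin = range A.mulVecLin ⊔ range B.mulVecLin := by
  have : (fromCols A B).col = Sum.elim A.col B.col := by
    ext (j | j) i <;> rfl
  rw [range_mulVecLin, range_mulVecLin, range_mulVecLin, this, Set.Sum.elim_range,
    Submodule.span_union]

theorem rank_fromCols_of_disjoint [Fintype n] [Fintype n'] {A : Matrix m n K} {B : Matrix m n' K}
    (h : Disjoint (range A.mulVecLin) (range B.mulVecLin)) :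
    (fromCols A B).rank = A.rank + B.rank := by
  have hsum := Submodule.finrank_sup_add_finrank_inf_eq (range A.mulVecLin) (range B.mulVecLin)
  rwa [h.eq_bot, finrank_bot, add_zero, ← range_mulVecLin_fromCols] at hsum

theorem rank_fromRows_of_disjoint [Fintype m] [Fintype m'] [Fintype n] {A : Matrix m n K}
    {B : Matrix m' n K} (h : Disjoint (range Aᵀ.mulVecLin) (range Bᵀ.mulVecLin)) :
    (fromRows A B).rank = A.rank + B.rank := by
  rw [← rank_transpose, transpose_fromRows, rank_fromCols_of_disjoint h, rank_transpose,
    rank_transpose]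

end Matrix

/-- If the column spaces and the row spaces of `X` and `Y` both
intersect trivially and `τ ≠ 0`, then `rank (X − τY) = rank X + rank Y`. -/
theorem rank_sub_smul_eq_add (m n : ℕ) (X Y : Matrix (Fin m) (Fin n) ℝ)
    (τ : ℝ) (hτ : τ ≠ 0)
    (hcol : LinearMap.range X.mulVecLin ⊓ LinearMap.range Y.mulVecLin = ⊥)
    (hrow : LinearMap.range X.transpose.mulVecLin ⊓ LinearMap.range Y.transpose.mulVecLin = ⊥) :
    (X - τ • Y).rank = X.rank + Y.rank := by
  have hτ' : -τ ≠ 0 := neg_ne_zero.mpr hτ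
  have hsplit : (X - τ • Y).mulVecLin = X.mulVecLin + (-τ) • Y.mulVecLin := by
    ext v; simp [sub_eq_add_neg]
  have hker : ker (X - τ • Y).mulVecLin = ker (Matrix.fromRows X Y).mulVecLin := by
    rw [hsplit, ker_add_eq_inf_of_disjoint_range, ker_smul _ _ hτ', Matrix.ker_mulVecLin_fromRows]
    rwa [range_smul _ _ hτ', disjoint_iff]
  rw [Matrix.rank_eq_rank_of_ker_mulVecLin_eq hker,
    Matrix.rank_fromRows_of_disjoint (disjoint_iff.mpr hrow)]
end

section
/- Let E be a real inner product space and let ε > 0. The map φ : E → E defined by φ(u) = u / max(‖u‖, ε) is Lipschitz with constant 1/ε; i.e., for all u, v ∈ E, ‖φ(u) − φ(v)‖ ≤ (1/ε)·‖u − v‖. -/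
/-!
Up to the factor `ε`, the clamped normalization is the radial retraction `r` of `E` onto the closed
ball of radius `ε`. This retraction is the metric projection onto that convex set: `u - r u` is a
nonnegative multiple of `u`, so `⟪u - r u, z - r u⟫ ≤ 0` for every `z` in the ball. Adding the two
such inequalities for `u` and `v` gives `‖r u - r v‖² ≤ ⟪r u - r v, u - v⟫`, so `r` is
`1`-Lipschitz, and hence the clamped normalization `ε⁻¹ • r` is `ε⁻¹`-Lipschitz.
-/

open RealInnerProductSpace

section

variable {E : Type*} [NormedAddCommGroup E] [InnerProductSpace ℝ E]

theorem norm_sub_le_of_inner_nonpos {u v p q : E} (hp : ⟪u - p, q - p⟫ ≤ 0)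
    (hq : ⟪v - q, p - q⟫ ≤ 0) : ‖p - q‖ ≤ ‖u - v‖ := by
  have hp' : 0 ≤ ⟪p - q, u - p⟫ := by
    rw [real_inner_comm, ← neg_sub p q, inner_neg_left] at hp
    linarith
  have hsplit : ⟪p - q, u - v⟫ = ‖p - q‖ ^ 2 + ⟪p - q, u - p⟫ - ⟪v - q, p - q⟫ := by
    rw [← real_inner_self_eq_norm_sq, real_inner_comm (p - q) (v - q), ← inner_add_right,
      ← inner_sub_right]
    congr 1
    abel
  have hsq : ‖p - q‖ ^ 2 ≤ ‖p - q‖ * ‖u - v‖ :=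
    calc ‖p - q‖ ^ 2 ≤ ⟪p - q, u - v⟫ := by linarith
      _ ≤ ‖p - q‖ * ‖u - v‖ := real_inner_le_norm _ _
  rcases (norm_nonneg (p - q)).eq_or_lt with h | h
  · rw [← h]
    exact norm_nonneg _
  · rw [sq] at hsq
    exact le_of_mul_le_mul_left hsq h

noncomputable def ballRetraction (ε : ℝ) (u : E) : E := ε • (max ‖u‖ ε)⁻¹ • u

section ballRetraction

variable {ε : ℝ} {u : E}

theorem ballRetraction_of_norm_le (hε : 0 < ε) (h : ‖u‖ ≤ ε) : ballRetraction ε u = u := by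
  rw [ballRetraction, max_eq_right h, smul_inv_smul₀ hε.ne']

theorem ballRetraction_of_lt_norm (h : ε < ‖u‖) : ballRetraction ε u = (ε / ‖u‖) • u := by
  rw [ballRetraction, max_eq_left h.le, smul_smul, div_eq_mul_inv]

theorem norm_ballRetraction_le (hε : 0 < ε) (u : E) : ‖ballRetraction ε u‖ ≤ ε := by
  rcases le_or_gt ‖u‖ ε with h | h
  · rwa [ballRetraction_of_norm_le hε h]
  · rw [ballRetraction_of_lt_norm h, norm_smul, Real.norm_of_nonneg (by positivity),
      div_mul_cancel₀ _ (hε.trans h).ne']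

theorem inner_sub_ballRetraction_nonpos (hε : 0 < ε) (u : E) {z : E} (hz : ‖z‖ ≤ ε) :
    ⟪u - ballRetraction ε u, z - ballRetraction ε u⟫ ≤ 0 := by
  rcases le_or_gt ‖u‖ ε with h | h
  · simp [ballRetraction_of_norm_le hε h]
  · have hu : 0 < ‖u‖ := hε.trans h
    have hcoeff : 0 ≤ 1 - ε / ‖u‖ := sub_nonneg.2 ((div_le_one hu).2 h.le)
    have hinner : ⟪u, z - ballRetraction ε u⟫ ≤ 0 :=
      calc ⟪u, z - ballRetraction ε u⟫ = ⟪u, z⟫ - ε * ‖u‖ := by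
            rw [ballRetraction_of_lt_norm h, inner_sub_right, real_inner_smul_right,
              real_inner_self_eq_norm_sq]
            field_simp
        _ ≤ ‖u‖ * ‖z‖ - ε * ‖u‖ := by gcongr; exact real_inner_le_norm _ _
        _ ≤ 0 := by nlinarith
    have hsub : u - ballRetraction ε u = (1 - ε / ‖u‖) • u := by
      rw [ballRetraction_of_lt_norm h, sub_smul, one_smul]
    rw [hsub, real_inner_smul_left]
    exact mul_nonpos_of_nonneg_of_nonpos hcoeff hinner

end ballRetraction

end

/-- The clamped normalization `φ(u) = u / max(‖u‖, ε)` is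
`(1/ε)`-Lipschitz on a real inner product space. -/
theorem clamped_normalization_lipschitz {E : Type*} [NormedAddCommGroup E]
    [InnerProductSpace ℝ E] (ε : ℝ) (hε : 0 < ε) :
    ∀ u v : E, ‖(max ‖u‖ ε)⁻¹ • u - (max ‖v‖ ε)⁻¹ • v‖ ≤ (1 / ε) * ‖u - v‖ := by
  intro u v
  have h := norm_sub_le_of_inner_nonpos
    (inner_sub_ballRetraction_nonpos hε u (norm_ballRetraction_le hε v))
    (inner_sub_ballRetraction_nonpos hε v (norm_ballRetraction_le hε u))
  rw [ballRetraction, ballRetraction, ← smul_sub, norm_smul, Real.norm_of_nonneg hε.le] at h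
  rw [one_div_mul_eq_div, le_div_iff₀ hε]
  linarith
end

section
/- Let W₀ ∈ ℝ^{d_out × d_in} with d_in ≥ 1, let ε > 0, set m_j = ‖W₀^{[:,j]}‖₂ for each column index j, and define the directional projection P : ℝ^{d_out × d_in} → ℝ^{d_out × d_in} by letting the j-th column of P(ΔW) be (m_j / max(‖(W₀+ΔW)^{[:,j]}‖₂, ε)) · (W₀+ΔW)^{[:,j]}. Then P is Lipschitz in the Frobenius norm with constant C = (max_j m_j)/ε; i.e., for all ΔW₁, ΔW₂ ∈ ℝ^{d_out × d_in}, ‖P(ΔW₁) − P(ΔW₂)‖_F ≤ C·‖ΔW₁ − ΔW₂‖_F. -/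
/-- The `j`-th column of a matrix, as a vector in Euclidean space. -/
noncomputable def matCol {dout din : ℕ} (X : Matrix (Fin dout) (Fin din) ℝ) (j : Fin din) :
    EuclideanSpace ℝ (Fin dout) :=
  (WithLp.equiv 2 (Fin dout → ℝ)).symm (fun i => X i j)

/-- The Frobenius norm of a matrix: `‖X‖_F² = Σ_j ‖X^{[:,j]}‖₂²`. -/
noncomputable def frobNorm {dout din : ℕ} (X : Matrix (Fin dout) (Fin din) ℝ) : ℝ :=
  Real.sqrt (∑ j, ‖matCol X j‖ ^ 2)

/-- The D²-LoRA directional projection: the `j`-th column of `P(ΔW)` is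
`(m_j / max(‖(W₀+ΔW)^{[:,j]}‖, ε)) • (W₀+ΔW)^{[:,j]}` with `m_j = ‖W₀^{[:,j]}‖`. -/
noncomputable def dirProj {dout din : ℕ} (W0 : Matrix (Fin dout) (Fin din) ℝ) (ε : ℝ)
    (ΔW : Matrix (Fin dout) (Fin din) ℝ) : Matrix (Fin dout) (Fin din) ℝ :=
  Matrix.of fun i j =>
    (‖matCol W0 j‖ / max ‖matCol (W0 + ΔW) j‖ ε) * (W0 + ΔW) i j

/-!
Up to the factor `m_j / ε`, the `j`-th column of `P(ΔW)` is the metric projection of the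
`j`-th column of `W₀ + ΔW` onto the closed ball of radius `ε`. Metric projections onto closed
convex sets of a Hilbert space are `1`-Lipschitz, so each column of `P(ΔW₁) - P(ΔW₂)` has
norm at most `(m_j / ε) ‖(ΔW₁ - ΔW₂)^{[:,j]}‖`, and summing the squares over the columns gives
the Frobenius bound.
-/

open scoped InnerProductSpace

section BallProj

variable {E : Type*} [NormedAddCommGroup E] [InnerProductSpace ℝ E]

noncomputable def ballProj (ε : ℝ) (u : E) : E :=
  (ε / max ‖u‖ ε) • u

variable {ε : ℝ}

lemma norm_ballProj_le (hε : 0 < ε) (u : E) : ‖ballProj ε u‖ ≤ ε := by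
  have ha : 0 < max ‖u‖ ε := hε.trans_le (le_max_right _ _)
  calc ‖ballProj ε u‖ = ‖u‖ / max ‖u‖ ε * ε := by
        rw [ballProj, norm_smul, Real.norm_of_nonneg (div_nonneg hε.le ha.le)]; ring
    _ ≤ 1 * ε := by gcongr; exact (div_le_one ha).2 (le_max_left _ _)
    _ = ε := one_mul ε

/-- The variational inequality characterising the projection onto the convex set `closedBall 0 ε`. -/
lemma inner_sub_ballProj_ballProj_sub_nonneg (hε : 0 < ε) (u : E) {z : E} (hz : ‖z‖ ≤ ε) :
    0 ≤ ⟪u - ballProj ε u, ballProj ε u - z⟫_ℝ := by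
  rcases le_or_gt ‖u‖ ε with hu | hu
  · simp [ballProj, max_eq_right hu, div_self hε.ne']
  have hproj : ballProj ε u = (ε / ‖u‖) • u := by rw [ballProj, max_eq_left hu.le]
  have hcoef : 0 ≤ 1 - ε / ‖u‖ := by
    rw [sub_nonneg, div_le_one (hε.trans hu)]; exact hu.le
  have hinner : ⟪u, z⟫_ℝ ≤ ε * ‖u‖ :=
    (real_inner_le_norm u z).trans (by rw [mul_comm]; gcongr)
  have hexpand : ⟪u - ballProj ε u, ballProj ε u - z⟫_ℝ
      = (1 - ε / ‖u‖) * (ε * ‖u‖ - ⟪u, z⟫_ℝ) := by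
    rw [hproj, show u - (ε / ‖u‖) • u = (1 - ε / ‖u‖) • u by rw [sub_smul, one_smul],
      real_inner_smul_left, inner_sub_right, real_inner_smul_right,
      real_inner_self_eq_norm_sq]
    field_simp
  rw [hexpand]
  exact mul_nonneg hcoef (sub_nonneg.2 hinner)

lemma norm_ballProj_sub_ballProj_le (hε : 0 < ε) (u v : E) :
    ‖ballProj ε u - ballProj ε v‖ ≤ ‖u - v‖ := by
  set p := ballProj ε u
  set q := ballProj ε v
  have hu := inner_sub_ballProj_ballProj_sub_nonneg hε u (norm_ballProj_le hε v)
  have hv := inner_sub_ballProj_ballProj_sub_nonneg hε v (norm_ballProj_le hε u)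
  -- adding the two variational inequalities: `‖p - q‖² ≤ ⟪u - v, p - q⟫`
  have hsq : ‖p - q‖ ^ 2 ≤ ‖u - v‖ * ‖p - q‖ :=
    calc ‖p - q‖ ^ 2
        = ⟪u - v, p - q⟫_ℝ - ⟪u - p, p - q⟫_ℝ - ⟪v - q, q - p⟫_ℝ := by
          rw [← real_inner_self_eq_norm_sq, ← neg_sub p q, inner_neg_right, sub_neg_eq_add,
            ← inner_sub_left, ← inner_add_left]
          congr 1; abel
      _ ≤ ⟪u - v, p - q⟫_ℝ := by linarith
      _ ≤ ‖u - v‖ * ‖p - q‖ := real_inner_le_norm _ _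
  rcases (norm_nonneg (p - q)).eq_or_lt with h0 | hpos
  · rw [← h0]; exact norm_nonneg _
  · exact le_of_mul_le_mul_right (by rwa [sq] at hsq) hpos

lemma div_max_smul_eq_smul_ballProj (m : ℝ) (hε : 0 < ε) (u : E) :
    (m / max ‖u‖ ε) • u = (m / ε) • ballProj ε u := by
  have ha : max ‖u‖ ε ≠ 0 := (hε.trans_le (le_max_right _ _)).ne'
  rw [ballProj, smul_smul]
  congr 1
  field_simp

end BallProj

section Columns

variable {dout din : ℕ}

lemma matCol_sub (X Y : Matrix (Fin dout) (Fin din) ℝ) (j : Fin din) :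
    matCol (X - Y) j = matCol X j - matCol Y j := rfl

lemma matCol_dirProj (W0 : Matrix (Fin dout) (Fin din) ℝ) {ε : ℝ} (hε : 0 < ε)
    (ΔW : Matrix (Fin dout) (Fin din) ℝ) (j : Fin din) :
    matCol (dirProj W0 ε ΔW) j = (‖matCol W0 j‖ / ε) • ballProj ε (matCol (W0 + ΔW) j) := by
  rw [← div_max_smul_eq_smul_ballProj _ hε]
  rfl

lemma frobNorm_le_of_norm_matCol_le {X Y : Matrix (Fin dout) (Fin din) ℝ} {c : ℝ} (hc : 0 ≤ c)
    (h : ∀ j, ‖matCol X j‖ ≤ c * ‖matCol Y j‖) : frobNorm X ≤ c * frobNorm Y := by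
  have hsum : ∑ j, ‖matCol X j‖ ^ 2 ≤ c ^ 2 * ∑ j, ‖matCol Y j‖ ^ 2 := by
    rw [Finset.mul_sum]
    gcongr with j
    rw [← mul_pow]
    exact pow_le_pow_left₀ (norm_nonneg _) (h j) 2
  calc frobNorm X ≤ Real.sqrt (c ^ 2 * ∑ j, ‖matCol Y j‖ ^ 2) := Real.sqrt_le_sqrt hsum
    _ = c * frobNorm Y := by rw [Real.sqrt_mul (sq_nonneg c), Real.sqrt_sq hc, frobNorm]

end Columns

/-- The directional projection `P` is Lipschitz in the Frobenius
norm with constant `C = (max_j m_j) / ε`. -/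
theorem dirProj_lipschitz (dout din : ℕ) (hdin : 0 < din)
    (W0 : Matrix (Fin dout) (Fin din) ℝ) (ε : ℝ) (hε : 0 < ε) (C : ℝ)
    (hC : C = (Finset.univ.sup' (Finset.univ_nonempty_iff.mpr ⟨⟨0, hdin⟩⟩)
      (fun j => ‖matCol W0 j‖)) / ε) :
    ∀ ΔW₁ ΔW₂ : Matrix (Fin dout) (Fin din) ℝ,
      frobNorm (dirProj W0 ε ΔW₁ - dirProj W0 ε ΔW₂) ≤ C * frobNorm (ΔW₁ - ΔW₂) := by
  intro ΔW₁ ΔW₂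
  have hcol_le : ∀ j, ‖matCol W0 j‖ / ε ≤ C := fun j => by
    rw [hC]; gcongr; exact Finset.le_sup' (fun j => ‖matCol W0 j‖) (Finset.mem_univ j)
  have hC0 : 0 ≤ C := (div_nonneg (norm_nonneg _) hε.le).trans (hcol_le ⟨0, hdin⟩)
  refine frobNorm_le_of_norm_matCol_le hC0 fun j => ?_
  have hdiff : matCol (W0 + ΔW₁) j - matCol (W0 + ΔW₂) j = matCol (ΔW₁ - ΔW₂) j := by
    rw [← matCol_sub, add_sub_add_left_eq_sub]
  calc ‖matCol (dirProj W0 ε ΔW₁ - dirProj W0 ε ΔW₂) j‖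
      = ‖matCol W0 j‖ / ε
          * ‖ballProj ε (matCol (W0 + ΔW₁) j) - ballProj ε (matCol (W0 + ΔW₂) j)‖ := by
        rw [matCol_sub, matCol_dirProj W0 hε, matCol_dirProj W0 hε, ← smul_sub, norm_smul,
          Real.norm_of_nonneg (div_nonneg (norm_nonneg _) hε.le)]
    _ ≤ C * ‖matCol (ΔW₁ - ΔW₂) j‖ := by
        rw [← hdiff]
        exact mul_le_mul (hcol_le j) (norm_ballProj_sub_ballProj_le hε _ _) (norm_nonneg _) hC0
end
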